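/- arXiv:1601.07147 — 2 statements merged into one kernel-verified Lean document; each statement's English description precedes it below -/
import Mathlib

section
/- Let Ω be a set. Let T be a nonempty simplicial tree in which every vertex has at most countably many neighbors, let a group G act on T by graph automorphisms with finitely many orbits of vertices, and let δ from the vertices of T to Ω be a G-invariant map (δ(g·v) = δ(v) for all g and v); let R be the eventual value of the neighbor refinement sequence starting from the equivalence relation R_0 v w ⟺ δ(v) = δ(w). Let T′, G′, δ′ (with values in the same set Ω) and R′ be the same data for a second such tree. Then there exists a graph isomorphism φ from T to T′ with δ′(φ(v)) = δ(v) for every vertex v if and only if there exists a bijection β from the set of R-equivalence classes of vertices of T to the set of R′-equivalence classes of vertices of T′ such that: (a) for every R-class C, every v in C and every v′ in β(C) satisfy δ(v) = δ′(v′); and (b) for all R-classes C and D, every v in C and every v′ in β(C), the cardinality (in ℕ ∪ {∞}) of the set of neighbors of v lying in D equals the cardinality of the set of neighbors of v′ lying in β(D). -/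
/-- The neighbor refinement sequence of a relation `R0` on the vertices of a graph `G`. -/
def nbhdRefine {V : Type*} (G : SimpleGraph V) (R0 : V → V → Prop) : ℕ → V → V → Prop
  | 0 => R0
  | (i + 1) => fun v w => R0 v w ∧ ∀ u : V,
      {x : V | G.Adj v x ∧ nbhdRefine G R0 i x u}.encard =
      {x : V | G.Adj w x ∧ nbhdRefine G R0 i x u}.encard

theorem nbhdRefine_equivalence {V : Type*} (G : SimpleGraph V) (R0 : V → V → Prop)
    (h : Equivalence R0) (i : ℕ) : Equivalence (nbhdRefine G R0 i) := by
  induction i with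
  | zero => exact h
  | succ i ih =>
    constructor
    · intro v
      exact ⟨h.refl v, fun u => rfl⟩
    · rintro v w ⟨h1, h2⟩
      exact ⟨h.symm h1, fun u => (h2 u).symm⟩
    · rintro v w x ⟨h1, h2⟩ ⟨h3, h4⟩
      exact ⟨h.trans h1 h3, fun u => (h2 u).trans (h4 u)⟩

/-- The setoid on the vertices of `G` given by the `s`-th stage of the neighbor refinement of
the partition of the vertices according to the values of a decoration `δ`. -/
def decorSetoid {V Ω : Type*} (G : SimpleGraph V) (δ : V → Ω) (s : ℕ) : Setoid V :=
  ⟨nbhdRefine G (fun a b => δ a = δ b) s,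
    nbhdRefine_equivalence G (fun a b => δ a = δ b)
      ⟨fun _ => rfl, fun h => h.symm, fun h₁ h₂ => h₁.trans h₂⟩ s⟩

/-!
A decoration-preserving isomorphism transports every stage of the neighbor refinement, hence
maps stable classes to stable classes with the same neighbor counts.

Conversely, colour each vertex `v` of `T` by `β [v]` and each vertex of `T'` by its class; then
any two vertices of the same colour have, for every colour, equally many neighbors of that colour.
Root the trees at vertices of the same colour and build the isomorphism outward: once `a ↦ a'`
and their parents are matched, removing the equally coloured parent from both neighborhoods
leaves countable sets of children with equally many vertices of each colour, which can therefore
be matched colour by colour. The resulting bijection maps children to children, so it is an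
isomorphism because in a tree every edge joins a vertex to its parent.
-/

open Set

lemma Set.Countable.nonempty_equiv_of_encard_eq {α β : Type*} {s : Set α} {t : Set β}
    (hs : s.Countable) (ht : t.Countable) (h : s.encard = t.encard) : Nonempty (s ≃ t) := by
  rw [← Cardinal.lift_mk_eq', ← Cardinal.toENat_eq_iff_of_le_aleph0
    (Cardinal.lift_le_aleph0.2 (Cardinal.le_aleph0_iff_set_countable.2 hs))
    (Cardinal.lift_le_aleph0.2 (Cardinal.le_aleph0_iff_set_countable.2 ht)),
    Cardinal.toENat_lift, Cardinal.toENat_lift]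
  exact h

lemma Equiv.exists_bijOn {α β : Type*} [Nonempty β] {s : Set α} {t : Set β} (e : s ≃ t) :
    ∃ f : α → β, BijOn f s t ∧ ∀ x : s, f x = e x := by
  classical
  let f : α → β := fun x => if hx : x ∈ s then e ⟨x, hx⟩ else Classical.arbitrary β
  have hf : ∀ x : s, f x = e x := fun x => dif_pos x.2
  refine ⟨f, ⟨fun x hx => hf ⟨x, hx⟩ ▸ (e _).2, fun x hx y hy hxy => ?_, fun y hy => ?_⟩, hf⟩
  · rw [hf ⟨x, hx⟩, hf ⟨y, hy⟩] at hxy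
    simpa using e.injective (Subtype.ext hxy)
  · exact ⟨e.symm ⟨y, hy⟩, (e.symm _).2, by rw [hf, Equiv.apply_symm_apply]⟩

lemma exists_bijOn_of_encard_inter_preimage_eq {α β κ : Type*} [Nonempty β] {s : Set α}
    {t : Set β} {c : α → κ} {c' : β → κ} (hs : s.Countable) (ht : t.Countable)
    (h : ∀ k, (s ∩ c ⁻¹' {k}).encard = (t ∩ c' ⁻¹' {k}).encard) :
    ∃ f : α → β, BijOn f s t ∧ ∀ x ∈ s, c' (f x) = c x := by
  have e k : Nonempty (↥(s ∩ c ⁻¹' {k}) ≃ ↥(t ∩ c' ⁻¹' {k})) :=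
    (hs.mono inter_subset_left).nonempty_equiv_of_encard_eq (ht.mono inter_subset_left) (h k)
  let E : s ≃ t := Equiv.ofFiberEquiv (f := fun x : s => c x) (g := fun y : t => c' y) fun k =>
    (Equiv.subtypeSubtypeEquivSubtypeInter _ _).trans
      ((e k).some.trans (Equiv.subtypeSubtypeEquivSubtypeInter _ _).symm)
  have hE : ∀ x : s, c' (E x) = c x :=
    Equiv.ofFiberEquiv_map (f := fun x : s => c x) (g := fun y : t => c' y) _
  obtain ⟨f, hf, hfE⟩ := E.exists_bijOn
  exact ⟨f, hf, fun x hx => (congrArg c' (hfE ⟨x, hx⟩)).trans (hE ⟨x, hx⟩)⟩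

lemma encard_sdiff_singleton_inter_preimage_eq {α β κ : Type*} {s : Set α} {t : Set β}
    {c : α → κ} {c' : β → κ} (h : ∀ k, (s ∩ c ⁻¹' {k}).encard = (t ∩ c' ⁻¹' {k}).encard)
    {p : α} {p' : β} (hp : c p = c' p') (hmem : p ∈ s ↔ p' ∈ t) (k : κ) :
    ((s \ {p}) ∩ c ⁻¹' {k}).encard = ((t \ {p'}) ∩ c' ⁻¹' {k}).encard := by
  rw [sdiff_inter_right_comm, sdiff_inter_right_comm]
  by_cases hk : p ∈ s ∩ c ⁻¹' {k}
  · have hk' : p' ∈ t ∩ c' ⁻¹' {k} := ⟨hmem.1 hk.1, hp.symm.trans hk.2⟩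
    rw [encard_sdiff_singleton_of_mem hk, encard_sdiff_singleton_of_mem hk', h]
  · have hk' : p' ∉ t ∩ c' ⁻¹' {k} := fun hk' => hk ⟨hmem.2 hk'.1, hp.trans hk'.2⟩
    rw [sdiff_singleton_eq_self hk, sdiff_singleton_eq_self hk', h]

namespace SimpleGraph

variable {V : Type*} {G : SimpleGraph V} {r v a b x y : V}

open Classical in
noncomputable def parent (G : SimpleGraph V) (r v : V) : V :=
  if h : ∃ p, G.Adj v p ∧ G.dist r p < G.dist r v then h.choose else v

/-- Since `G.parent r r = r` is not a neighbor of `r`, `G.children r r` is the whole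
neighborhood of the root. -/
def children (G : SimpleGraph V) (r a : V) : Set V :=
  G.neighborSet a \ {G.parent r a}

@[simp]
lemma parent_self : G.parent r r = r := by
  simp [parent]

lemma Connected.exists_adj_dist_lt (hG : G.Connected) (hv : v ≠ r) :
    ∃ p, G.Adj v p ∧ G.dist r p < G.dist r v := by
  obtain ⟨q, hq⟩ := hG.exists_walk_length_eq_dist v r
  cases q with
  | nil => exact absurd rfl hv
  | cons h q =>
    refine ⟨_, h, ?_⟩
    rw [dist_comm, dist_comm (u := r), ← hq, Walk.length_cons]
    exact Nat.lt_succ_of_le (dist_le q)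

namespace IsTree

lemma parent_spec (hT : G.IsTree) (hv : v ≠ r) :
    G.Adj v (G.parent r v) ∧ G.dist r (G.parent r v) + 1 = G.dist r v := by
  have h := hT.connected.exists_adj_dist_lt hv
  rw [parent, dif_pos h]
  refine ⟨h.choose_spec.1, ?_⟩
  have := h.choose_spec.2
  rcases hT.dist_eq_dist_add_one_of_adj r h.choose_spec.1 with h' | h' <;> omega

lemma dist_parent_le (hT : G.IsTree) : G.dist r (G.parent r v) ≤ G.dist r v := by
  rcases eq_or_ne v r with rfl | hv
  · simp
  · have := (hT.parent_spec hv).2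
    omega

lemma adj_parent_iff (hT : G.IsTree) : G.Adj v (G.parent r v) ↔ v ≠ r := by
  refine ⟨?_, fun hv => (hT.parent_spec hv).1⟩
  rintro h rfl
  simp at h

lemma eq_of_adj_of_dist_lt (hT : G.IsTree) (ha : G.Adj v a) (hb : G.Adj v b)
    (hda : G.dist r a < G.dist r v) (hdb : G.dist r b < G.dist r v) : a = b := by
  classical
  obtain ⟨P, hP, -⟩ := hT.connected.exists_path_of_dist r v
  have hpen : ∀ a, G.Adj v a → G.dist r a < G.dist r v → a = P.penultimate := by
    intro a ha hda
    obtain ⟨q, hq, hql⟩ := hT.connected.exists_path_of_dist r a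
    have hvq : v ∉ q.support := fun hv => by
      have := (dist_le (q.takeUntil v hv)).trans (q.length_takeUntil_le_length hv)
      omega
    exact hT.isAcyclic.eq_penultimate_of_adj_end hP ha
      (hT.isAcyclic.mem_support_of_ne_mem_support_of_adj_of_isPath hP hq ha hvq)
  rw [hpen a ha hda, hpen b hb hdb]

lemma mem_children_iff (hT : G.IsTree) : x ∈ G.children r a ↔ x ≠ r ∧ G.parent r x = a := by
  constructor
  · rintro ⟨hax, hxp⟩
    rcases hT.dist_eq_dist_add_one_of_adj r hax with hd | hd
    · have ha : a ≠ r := by rintro rfl; simp at hd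
      have hp := hT.parent_spec ha
      exact absurd (hT.eq_of_adj_of_dist_lt (r := r) hax hp.1 (by omega) (by omega)) hxp
    · have hx : x ≠ r := by rintro rfl; simp at hd
      have hp := hT.parent_spec hx
      exact ⟨hx, hT.eq_of_adj_of_dist_lt (r := r) hp.1 (G.adj_symm hax) (by omega) (by omega)⟩
  · rintro ⟨hx, rfl⟩
    have hp := hT.parent_spec hx
    refine ⟨hp.1.symm, fun h => ?_⟩
    have := hT.dist_parent_le (r := r) (v := G.parent r x)
    rw [← mem_singleton_iff.mp h] at this
    omega

lemma adj_iff_mem_children (hT : G.IsTree) :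
    G.Adj x y ↔ x ∈ G.children r y ∨ y ∈ G.children r x := by
  refine ⟨fun h => ?_, by rintro (h | h) <;> [exact h.1.symm; exact h.1]⟩
  by_cases hx : x = G.parent r y
  · refine Or.inr ((hT.mem_children_iff).2 ⟨?_, hx.symm⟩)
    rintro rfl
    rw [parent_self] at hx
    exact h.ne hx
  · exact Or.inl ⟨h.symm, hx⟩

end IsTree

def IsChildMatching {V' κ : Type*} (G : SimpleGraph V) (G' : SimpleGraph V') (r : V) (r' : V')
    (c : V → κ) (c' : V' → κ) (m : V → V' → V → V') : Prop :=
  ∀ a a', c a = c' a' → c (G.parent r a) = c' (G'.parent r' a') → (a = r ↔ a' = r') →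
    BijOn (m a a') (G.children r a) (G'.children r' a') ∧
      ∀ x ∈ G.children r a, c' (m a a' x) = c x

open Classical in
noncomputable def IsTree.mapAlongChildren {V' : Type*} (hT : G.IsTree) (r : V) (r' : V')
    (m : V → V' → V → V') (v : V) : V' :=
  if hv : v = r then r' else
    have := (hT.parent_spec hv).2
    m (G.parent r v) (hT.mapAlongChildren r r' m (G.parent r v)) v
termination_by G.dist r v

namespace IsTree

variable {V' κ : Type*} {G' : SimpleGraph V'} {r' : V'} {c : V → κ} {c' : V' → κ}
  {m : V → V' → V → V'}

@[simp]
lemma mapAlongChildren_self (hT : G.IsTree) : hT.mapAlongChildren r r' m r = r' := by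
  rw [mapAlongChildren, dif_pos rfl]

lemma mapAlongChildren_of_ne (hT : G.IsTree) (hv : v ≠ r) :
    hT.mapAlongChildren r r' m v =
      m (G.parent r v) (hT.mapAlongChildren r r' m (G.parent r v)) v := by
  rw [mapAlongChildren, dif_neg hv]

lemma mapAlongChildren_children_of_spec (hT : G.IsTree)
    (hm : IsChildMatching G G' r r' c c' m)
    (ha : c' (hT.mapAlongChildren r r' m a) = c a)
    (ha_root : hT.mapAlongChildren r r' m a = r' ↔ a = r)
    (ha_parent : G'.parent r' (hT.mapAlongChildren r r' m a) =
      hT.mapAlongChildren r r' m (G.parent r a))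
    (hpa : c' (hT.mapAlongChildren r r' m (G.parent r a)) = c (G.parent r a)) :
    BijOn (hT.mapAlongChildren r r' m) (G.children r a)
        (G'.children r' (hT.mapAlongChildren r r' m a)) ∧
      ∀ x ∈ G.children r a, c' (hT.mapAlongChildren r r' m x) = c x := by
  have hEq : EqOn (hT.mapAlongChildren r r' m) (m a (hT.mapAlongChildren r r' m a))
      (G.children r a) := fun x hx => by
    obtain ⟨hxr, rfl⟩ := (hT.mem_children_iff).1 hx
    exact hT.mapAlongChildren_of_ne hxr
  obtain ⟨hbij, hcol⟩ := hm a _ ha.symm (by rw [ha_parent, hpa]) ha_root.symm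
  exact ⟨hbij.congr hEq.symm, fun x hx => hEq hx ▸ hcol x hx⟩

lemma mapAlongChildren_spec (hT : G.IsTree) (hT' : G'.IsTree) (hr : c r = c' r')
    (hm : IsChildMatching G G' r r' c c' m) (v : V) :
    c' (hT.mapAlongChildren r r' m v) = c v ∧ (hT.mapAlongChildren r r' m v = r' ↔ v = r) ∧
      G'.parent r' (hT.mapAlongChildren r r' m v) =
        hT.mapAlongChildren r r' m (G.parent r v) := by
  induction hn : G.dist r v using Nat.strong_induction_on generalizing v with
  | _ n ih =>
  by_cases hv : v = r
  · subst hv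
    simp [hr]
  have hpv := (hT.parent_spec hv).2
  have hppv := hT.dist_parent_le (r := r) (v := G.parent r v)
  obtain ⟨ha, ha_root, ha_parent⟩ := ih _ (by omega) (G.parent r v) rfl
  have hpa := (ih _ (by omega) (G.parent r (G.parent r v)) rfl).1
  obtain ⟨hbij, hcol⟩ := hT.mapAlongChildren_children_of_spec hm ha ha_root ha_parent hpa
  have hvc : v ∈ G.children r (G.parent r v) := (hT.mem_children_iff).2 ⟨hv, rfl⟩
  obtain ⟨himg_ne, himg_parent⟩ := (hT'.mem_children_iff).1 (hbij.mapsTo hvc)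
  exact ⟨hcol v hvc, iff_of_false himg_ne hv, himg_parent⟩

lemma bijOn_mapAlongChildren_children (hT : G.IsTree) (hT' : G'.IsTree) (hr : c r = c' r')
    (hm : IsChildMatching G G' r r' c c' m) (a : V) :
    BijOn (hT.mapAlongChildren r r' m) (G.children r a)
      (G'.children r' (hT.mapAlongChildren r r' m a)) :=
  have ha := hT.mapAlongChildren_spec hT' hr hm a
  (hT.mapAlongChildren_children_of_spec hm ha.1 ha.2.1 ha.2.2
    (hT.mapAlongChildren_spec hT' hr hm _).1).1

lemma mapAlongChildren_injective (hT : G.IsTree) (hT' : G'.IsTree) (hr : c r = c' r')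
    (hm : IsChildMatching G G' r r' c c' m) : Function.Injective (hT.mapAlongChildren r r' m) := by
  have hspec := hT.mapAlongChildren_spec hT' hr hm
  intro x y hxy
  induction hn : G.dist r x using Nat.strong_induction_on generalizing x y with
  | _ n ih =>
  have hroot : x = r ↔ y = r := by rw [← (hspec x).2.1, ← (hspec y).2.1, hxy]
  by_cases hx : x = r
  · rw [hx, hroot.1 hx]
  have hpar : G.parent r x = G.parent r y := by
    refine ih _ ?_ ?_ rfl
    · have := (hT.parent_spec hx).2
      omega
    · rw [← (hspec x).2.2, ← (hspec y).2.2, hxy]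
  have hyc : y ∈ G.children r (G.parent r x) :=
    (hT.mem_children_iff).2 ⟨mt hroot.2 hx, hpar.symm⟩
  exact (hT.bijOn_mapAlongChildren_children hT' hr hm _).injOn
    ((hT.mem_children_iff).2 ⟨hx, rfl⟩) hyc hxy

lemma mapAlongChildren_surjective (hT : G.IsTree) (hT' : G'.IsTree) (hr : c r = c' r')
    (hm : IsChildMatching G G' r r' c c' m) :
    Function.Surjective (hT.mapAlongChildren r r' m) := by
  intro v'
  induction hn : G'.dist r' v' using Nat.strong_induction_on generalizing v' with
  | _ n ih =>
  by_cases hv' : v' = r'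
  · exact ⟨r, hv' ▸ hT.mapAlongChildren_self⟩
  obtain ⟨a, ha⟩ := ih _ (by have := (hT'.parent_spec hv').2; omega) (G'.parent r' v') rfl
  have hv'c : v' ∈ G'.children r' (hT.mapAlongChildren r r' m a) :=
    (hT'.mem_children_iff).2 ⟨hv', ha.symm⟩
  obtain ⟨x, -, hx⟩ := (hT.bijOn_mapAlongChildren_children hT' hr hm a).surjOn hv'c
  exact ⟨x, hx⟩

lemma mapAlongChildren_mem_children_iff (hT : G.IsTree) (hT' : G'.IsTree) (hr : c r = c' r')
    (hm : IsChildMatching G G' r r' c c' m) :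
    hT.mapAlongChildren r r' m x ∈ G'.children r' (hT.mapAlongChildren r r' m y) ↔
      x ∈ G.children r y := by
  have hbij := hT.bijOn_mapAlongChildren_children hT' hr hm y
  refine ⟨fun hx => ?_, fun hx => hbij.mapsTo hx⟩
  obtain ⟨z, hz, hzx⟩ := hbij.surjOn hx
  exact hT.mapAlongChildren_injective hT' hr hm hzx ▸ hz

lemma exists_isChildMatching (hT : G.IsTree) (hT' : G'.IsTree)
    (hcount : ∀ v, (G.neighborSet v).Countable) (hcount' : ∀ v', (G'.neighborSet v').Countable)
    (hloc : ∀ v v', c v = c' v' → ∀ k,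
      (G.neighborSet v ∩ c ⁻¹' {k}).encard = (G'.neighborSet v' ∩ c' ⁻¹' {k}).encard)
    (r : V) (r' : V') : ∃ m, IsChildMatching G G' r r' c c' m := by
  have : Nonempty V' := ⟨r'⟩
  have hmatch : ∀ a a', ∃ f : V → V', c a = c' a' → c (G.parent r a) = c' (G'.parent r' a') →
      (a = r ↔ a' = r') → BijOn f (G.children r a) (G'.children r' a') ∧
        ∀ x ∈ G.children r a, c' (f x) = c x := by
    intro a a'
    by_cases h : c a = c' a' ∧ c (G.parent r a) = c' (G'.parent r' a') ∧ (a = r ↔ a' = r')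
    · obtain ⟨hc, hpc, hroot⟩ := h
      have hpmem : G.parent r a ∈ G.neighborSet a ↔ G'.parent r' a' ∈ G'.neighborSet a' := by
        simp only [mem_neighborSet, hT.adj_parent_iff, hT'.adj_parent_iff, hroot.not]
      obtain ⟨f, hf⟩ := exists_bijOn_of_encard_inter_preimage_eq
        ((hcount a).mono sdiff_subset) ((hcount' a').mono sdiff_subset)
        (encard_sdiff_singleton_inter_preimage_eq (hloc a a' hc) hpc hpmem)
      exact ⟨f, fun _ _ _ => hf⟩
    · exact ⟨fun _ => r', fun h₁ h₂ h₃ => absurd ⟨h₁, h₂, h₃⟩ h⟩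
  choose m hm using hmatch
  exact ⟨m, hm⟩

theorem exists_iso_of_encard_inter_preimage_eq (hT : G.IsTree) (hT' : G'.IsTree)
    (hcount : ∀ v, (G.neighborSet v).Countable) (hcount' : ∀ v', (G'.neighborSet v').Countable)
    (hloc : ∀ v v', c v = c' v' → ∀ k,
      (G.neighborSet v ∩ c ⁻¹' {k}).encard = (G'.neighborSet v' ∩ c' ⁻¹' {k}).encard)
    (hr : c r = c' r') : ∃ φ : G ≃g G', ∀ v, c' (φ v) = c v := by
  obtain ⟨m, hm⟩ := exists_isChildMatching hT hT' hcount hcount' hloc r r'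
  refine ⟨⟨Equiv.ofBijective _ ⟨hT.mapAlongChildren_injective hT' hr hm,
      hT.mapAlongChildren_surjective hT' hr hm⟩, fun {x y} => ?_⟩,
    fun v => (hT.mapAlongChildren_spec hT' hr hm v).1⟩
  rw [hT'.adj_iff_mem_children (r := r'), hT.adj_iff_mem_children (r := r)]
  exact or_congr (hT.mapAlongChildren_mem_children_iff hT' hr hm)
    (hT.mapAlongChildren_mem_children_iff hT' hr hm)

end IsTree

end SimpleGraph

section NeighborRefinement

variable {V V' : Type*} {G : SimpleGraph V} {G' : SimpleGraph V'}

lemma rel_of_nbhdRefine {R0 : V → V → Prop} {i : ℕ} {v w : V} (h : nbhdRefine G R0 i v w) :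
    R0 v w := by
  cases i with
  | zero => exact h
  | succ i => exact h.1

lemma SimpleGraph.Iso.encard_adj_and_eq (φ : G ≃g G') {p : V → Prop} {p' : V' → Prop}
    (h : ∀ x, p x ↔ p' (φ x)) (v : V) :
    {x | G.Adj v x ∧ p x}.encard = {x' | G'.Adj (φ v) x' ∧ p' x'}.encard := by
  rw [← φ.injective.encard_image]
  congr 1
  ext x'
  obtain ⟨x, rfl⟩ := φ.surjective x'
  rw [φ.injective.mem_set_image]
  simp only [mem_ofPred_eq, φ.map_adj_iff, h]

lemma nbhdRefine_iso_iff (φ : G ≃g G') {R0 : V → V → Prop} {R0' : V' → V' → Prop}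
    (h0 : ∀ v w, R0 v w ↔ R0' (φ v) (φ w)) (i : ℕ) (v w : V) :
    nbhdRefine G R0 i v w ↔ nbhdRefine G' R0' i (φ v) (φ w) := by
  induction i generalizing v w with
  | zero => exact h0 v w
  | succ i ih =>
    have hcount x u := φ.encard_adj_and_eq (p := (nbhdRefine G R0 i · u))
      (p' := (nbhdRefine G' R0' i · (φ u))) (fun y => ih y u) x
    exact and_congr (h0 v w) ((forall_congr' fun u => by rw [hcount v u, hcount w u]).trans
      φ.surjective.forall.symm)

lemma nbhdRefine_iso_iff_of_stable (φ : G ≃g G') {R0 : V → V → Prop} {R0' : V' → V' → Prop}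
    (h0 : ∀ v w, R0 v w ↔ R0' (φ v) (φ w)) {s s' : ℕ}
    (hs : ∀ i, s ≤ i → ∀ v w, nbhdRefine G R0 i v w ↔ nbhdRefine G R0 s v w)
    (hs' : ∀ i, s' ≤ i → ∀ v w, nbhdRefine G' R0' i v w ↔ nbhdRefine G' R0' s' v w)
    (v w : V) : nbhdRefine G R0 s v w ↔ nbhdRefine G' R0' s' (φ v) (φ w) := by
  rw [← hs _ (le_max_left s s'), ← hs' _ (le_max_right s s')]
  exact nbhdRefine_iso_iff φ h0 _ v w

lemma encard_adj_nbhdRefine_eq_of_stable {R0 : V → V → Prop} (hR0 : Equivalence R0) {s : ℕ}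
    (hs : ∀ i, s ≤ i → ∀ v w, nbhdRefine G R0 i v w ↔ nbhdRefine G R0 s v w) {v w u u' : V}
    (hvw : nbhdRefine G R0 s v w) (huu' : nbhdRefine G R0 s u u') :
    {x | G.Adj v x ∧ nbhdRefine G R0 s x u}.encard =
      {x | G.Adj w x ∧ nbhdRefine G R0 s x u'}.encard := by
  have hR := nbhdRefine_equivalence G R0 hR0 s
  rw [((hs (s + 1) s.le_succ v w).2 hvw).2 u]
  congr 1
  ext x
  exact and_congr_right fun _ => ⟨(hR.trans · huu'), (hR.trans · (hR.symm huu'))⟩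

lemma encard_adj_inter_preimage_eq_of_quotientEquiv {S : Setoid V} {S' : Setoid V'}
    (β : Quotient S ≃ Quotient S')
    (hβ : ∀ v u v' u', β (Quotient.mk S v) = Quotient.mk S' v' →
      β (Quotient.mk S u) = Quotient.mk S' u' →
      {x | G.Adj v x ∧ S x u}.encard = {x | G'.Adj v' x ∧ S' x u'}.encard)
    {v : V} {v' : V'} (hv : β (Quotient.mk S v) = Quotient.mk S' v') (K : Quotient S') :
    (G.neighborSet v ∩ (fun x => β (Quotient.mk S x)) ⁻¹' {K}).encard =
      (G'.neighborSet v' ∩ Quotient.mk S' ⁻¹' {K}).encard := by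
  obtain ⟨u', rfl⟩ := Quotient.exists_rep K
  obtain ⟨u, hu_rep⟩ := Quotient.exists_rep (β.symm ⟦u'⟧)
  have hu : β (Quotient.mk S u) = Quotient.mk S' u' := by
    rw [← β.apply_symm_apply ⟦u'⟧, ← hu_rep]
  convert hβ v u v' u' hv hu using 3
  · ext x
    simp [← hu, Quotient.eq]
  · ext x
    simp [Quotient.eq]

end NeighborRefinement

theorem decorated_tree_isomorphism_iff_structure_invariants_agree_general
    {V V' Ω : Type*}
    (G : SimpleGraph V) (G' : SimpleGraph V')
    (hT : G.IsTree) (hT' : G'.IsTree)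
    (hcount : ∀ v : V, (G.neighborSet v).Countable)
    (hcount' : ∀ v : V', (G'.neighborSet v).Countable)
    (δ : V → Ω) (δ' : V' → Ω)
    (s s' : ℕ)
    (hs : ∀ i : ℕ, s ≤ i → ∀ v w : V,
      nbhdRefine G (fun a b => δ a = δ b) i v w ↔ nbhdRefine G (fun a b => δ a = δ b) s v w)
    (hs' : ∀ i : ℕ, s' ≤ i → ∀ v w : V',
      nbhdRefine G' (fun a b => δ' a = δ' b) i v w ↔
        nbhdRefine G' (fun a b => δ' a = δ' b) s' v w) :
    (∃ φ : G ≃g G', ∀ v : V, δ' (φ v) = δ v) ↔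
    ∃ β : Quotient (decorSetoid G δ s) ≃ Quotient (decorSetoid G' δ' s'),
      (∀ (v : V) (v' : V'),
        β (Quotient.mk (decorSetoid G δ s) v) = Quotient.mk (decorSetoid G' δ' s') v' →
        δ v = δ' v') ∧
      (∀ (v u : V) (v' u' : V'),
        β (Quotient.mk (decorSetoid G δ s) v) = Quotient.mk (decorSetoid G' δ' s') v' →
        β (Quotient.mk (decorSetoid G δ s) u) = Quotient.mk (decorSetoid G' δ' s') u' →
        {x : V | G.Adj v x ∧ nbhdRefine G (fun a b => δ a = δ b) s x u}.encard =
        {x : V' | G'.Adj v' x ∧ nbhdRefine G' (fun a b => δ' a = δ' b) s' x u'}.encard) := by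
  constructor
  · rintro ⟨φ, hφ⟩
    have key := nbhdRefine_iso_iff_of_stable φ (fun v w => by rw [hφ, hφ]) hs hs'
    refine ⟨Quotient.congr φ.toEquiv key, fun v v' h => ?_, fun v u v' u' hv hu => ?_⟩
    · have hvv' : nbhdRefine G' (fun a b => δ' a = δ' b) s' (φ v) v' := Quotient.exact h
      exact (hφ v).symm.trans (rel_of_nbhdRefine (R0 := fun a b => δ' a = δ' b) hvv')
    · exact (φ.encard_adj_and_eq (fun x => key x u) v).trans
        (encard_adj_nbhdRefine_eq_of_stable (R0 := fun a b => δ' a = δ' b)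
          ⟨fun _ => rfl, Eq.symm, Eq.trans⟩ hs'
          (Quotient.exact hv) (Quotient.exact hu))
  · rintro ⟨β, hβδ, hβcount⟩
    obtain ⟨r⟩ := hT.connected.nonempty
    obtain ⟨r', hr'⟩ := Quotient.exists_rep (β (Quotient.mk _ r))
    obtain ⟨φ, hφ⟩ := hT.exists_iso_of_encard_inter_preimage_eq hT' hcount hcount'
      (fun v v' hv => encard_adj_inter_preimage_eq_of_quotientEquiv β hβcount hv) hr'.symm
    exact ⟨φ, fun v => (hβδ v (φ v) (hφ v).symm).symm⟩

/-- Two decorated cocompact trees (with countable valences) are isomorphic by a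
decoration-preserving isomorphism iff there is a bijection between the classes of their stable
neighbor refinements that is compatible with the initial decorations and with the counts of
neighbors in each class (i.e. iff they have the same structure invariant). -/
theorem decorated_tree_isomorphism_iff_structure_invariants_agree
    {V V' Ω : Type*}
    (G : SimpleGraph V) (G' : SimpleGraph V')
    (hT : G.IsTree) (hT' : G'.IsTree)
    (hcount : ∀ v : V, (G.neighborSet v).Countable)
    (hcount' : ∀ v : V', (G'.neighborSet v).Countable)
    {Γ Γ' : Type*} [Group Γ] [MulAction Γ V] [Group Γ'] [MulAction Γ' V']
    (hact : ∀ (g : Γ) (u v : V), G.Adj u v → G.Adj (g • u) (g • v))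
    (hact' : ∀ (g : Γ') (u v : V'), G'.Adj u v → G'.Adj (g • u) (g • v))
    (hfin : Finite (Quotient (MulAction.orbitRel Γ V)))
    (hfin' : Finite (Quotient (MulAction.orbitRel Γ' V')))
    (δ : V → Ω) (δ' : V' → Ω)
    (hδ : ∀ (g : Γ) (v : V), δ (g • v) = δ v)
    (hδ' : ∀ (g : Γ') (v : V'), δ' (g • v) = δ' v)
    (s s' : ℕ)
    (hs : ∀ i : ℕ, s ≤ i → ∀ v w : V,
      nbhdRefine G (fun a b => δ a = δ b) i v w ↔ nbhdRefine G (fun a b => δ a = δ b) s v w)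
    (hs' : ∀ i : ℕ, s' ≤ i → ∀ v w : V',
      nbhdRefine G' (fun a b => δ' a = δ' b) i v w ↔
        nbhdRefine G' (fun a b => δ' a = δ' b) s' v w) :
    (∃ φ : G ≃g G', ∀ v : V, δ' (φ v) = δ v) ↔
    ∃ β : Quotient (decorSetoid G δ s) ≃ Quotient (decorSetoid G' δ' s'),
      (∀ (v : V) (v' : V'),
        β (Quotient.mk (decorSetoid G δ s) v) = Quotient.mk (decorSetoid G' δ' s') v' →
        δ v = δ' v') ∧
      (∀ (v u : V) (v' u' : V'),
        β (Quotient.mk (decorSetoid G δ s) v) = Quotient.mk (decorSetoid G' δ' s') v' →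
        β (Quotient.mk (decorSetoid G δ s) u) = Quotient.mk (decorSetoid G' δ' s') u' →
        {x : V | G.Adj v x ∧ nbhdRefine G (fun a b => δ a = δ b) s x u}.encard =
        {x : V' | G'.Adj v' x ∧ nbhdRefine G' (fun a b => δ' a = δ' b) s' x u'}.encard) :=
  decorated_tree_isomorphism_iff_structure_invariants_agree_general G G' hT hT' hcount hcount' δ δ'
    s s' hs hs'
end

section
/- Suppose X and X′ are trees of spaces over oriented simplicial trees T and T′ respectively, and χ: T → T′ is an isomorphism of oriented trees. Suppose there exist M ≥ 1 and A ≥ 0 such that: (1) for each vertex v of T there is an (M,A)-quasi-isometry φ_v: X_v → X′_{χ(v)} together with a quasi-isometry coarse inverse φ̄_v: X′_{χ(v)} → X_v; (2) for every oriented edge e of T (including reversals of edges in E⁺), the set φ_{ι(e)}(X_e) is A-coarsely equivalent to X′_{χ(e)} in X′_{χ(ι(e))}, and φ̄_{ι(e)}(X′_{χ(e)}) is A-coarsely equivalent to X_e in X_{ι(e)}; (3) for every oriented edge e and every x ∈ X_e there exists x′ ∈ X′_{χ(e)} with d(φ_{ι(e)}(x), x′) ≤ A and d(φ_{τ(e)}(α_e(x)),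 α′_{χ(e)}(x′)) ≤ A; and (4) for every oriented edge e and every x′ ∈ X′_{χ(e)} there exists x ∈ X_e with d(φ̄_{ι(e)}(x′), x) ≤ A and d(φ̄_{τ(e)}(α′_{χ(e)}(x′)), α_e(x)) ≤ A. Then there is a quasi-isometry φ: X → X′ whose restriction to each vertex space X_v equals φ_v. -/
/-- The data of a tree of spaces over an oriented simplicial tree: an oriented graph with
vertex set `V`, oriented edge set `E` and endpoint maps `ι`, `τ`; a metric space `X v` for
each vertex; an edge space `Xe e ⊆ X (ι e)` for each oriented edge; an attaching map
`α e : X (ι e) → X (τ e)` (only its restriction to `Xe e` is relevant) and a coarse inverse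
`β e : X (τ e) → X (ι e)` of it. -/
structure TreeOfSpacesData where
  V : Type
  E : Type
  ι : E → V
  τ : E → V
  X : V → Type
  met : ∀ v, MetricSpace (X v)
  Xe : ∀ e, Set (X (ι e))
  α : ∀ e, X (ι e) → X (τ e)
  β : ∀ e, X (τ e) → X (ι e)

namespace TreeOfSpacesData

instance (T : TreeOfSpacesData) (v : T.V) : MetricSpace (T.X v) := T.met v

/-- The condition that `β e` is a coarse inverse of `α e` on the edge space, uniformly over
all edges: this is the defining condition of a tree of spaces. -/
def IsTreeOfSpaces (T : TreeOfSpacesData) : Prop :=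
  ∃ C : ℝ, 0 ≤ C ∧
    (∀ e, ∀ x ∈ T.Xe e, dist (T.β e (T.α e x)) x ≤ C) ∧
    (∀ e, ∀ y ∈ T.α e '' T.Xe e, dist (T.α e (T.β e y)) y ≤ C)

/-- The underlying simple graph of the oriented graph `(V, E, ι, τ)`. -/
def graph (T : TreeOfSpacesData) : SimpleGraph T.V where
  Adj u v := u ≠ v ∧ ∃ e : T.E, (T.ι e = u ∧ T.τ e = v) ∨ (T.ι e = v ∧ T.τ e = u)
  symm := by
    constructor
    rintro u v ⟨hne, e, h⟩
    exact ⟨hne.symm, e, h.symm⟩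
  loopless := by
    constructor
    rintro v ⟨hne, -⟩
    exact hne rfl

/-- The oriented graph `(V, E, ι, τ)` is an oriented simplicial tree: the underlying simple
graph is a tree, there are no loops, and there are no multiple (or oppositely repeated)
edges. -/
def IsOrientedSimplicialTree (T : TreeOfSpacesData) : Prop :=
  T.graph.IsTree ∧ (∀ e : T.E, T.ι e ≠ T.τ e) ∧
    ∀ e e' : T.E,
      ((T.ι e = T.ι e' ∧ T.τ e = T.τ e') ∨ (T.ι e = T.τ e' ∧ T.τ e = T.ι e')) → e = e'

/-- The points of the total space of a tree of spaces: the points of the vertex spaces,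
together with the interior points `(x, t)`, `0 < t < 1`, of the rungs `{x} × [0,1]` over the
points `x` of the edge spaces.  (The endpoints `(x,0)` and `(x,1)` of a rung are identified
with `x ∈ X (ι e)` and `α e x ∈ X (τ e)` respectively, so this is exactly the quotient of
the disjoint union defining the total space.) -/
inductive Pt (T : TreeOfSpacesData) : Type
  | vert (v : T.V) (x : T.X v) : Pt T
  | rung (e : T.E) (x : T.X (T.ι e)) (hx : x ∈ T.Xe e) (t : ℝ)
      (ht0 : 0 < t) (ht1 : t < 1) : Pt T

/-- `PieceDist T p q r` holds when `p` and `q` lie in a common piece (a vertex space or a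
rung) in which their distance is `r`. -/
inductive PieceDist (T : TreeOfSpacesData) : Pt T → Pt T → ℝ → Prop
  | vert (v : T.V) (x y : T.X v) :
      PieceDist T (.vert v x) (.vert v y) (dist x y)
  | rung_rung (e : T.E) (x : T.X (T.ι e)) (hx : x ∈ T.Xe e) (s t : ℝ)
      (hs0 : 0 < s) (hs1 : s < 1) (ht0 : 0 < t) (ht1 : t < 1) :
      PieceDist T (.rung e x hx s hs0 hs1) (.rung e x hx t ht0 ht1) |s - t|
  | bot_rung (e : T.E) (x : T.X (T.ι e)) (hx : x ∈ T.Xe e) (t : ℝ)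
      (ht0 : 0 < t) (ht1 : t < 1) :
      PieceDist T (.vert (T.ι e) x) (.rung e x hx t ht0 ht1) t
  | top_rung (e : T.E) (x : T.X (T.ι e)) (hx : x ∈ T.Xe e) (t : ℝ)
      (ht0 : 0 < t) (ht1 : t < 1) :
      PieceDist T (.vert (T.τ e) (T.α e x)) (.rung e x hx t ht0 ht1) (1 - t)
  | bot_top (e : T.E) (x : T.X (T.ι e)) (hx : x ∈ T.Xe e) :
      PieceDist T (.vert (T.ι e) x) (.vert (T.τ e) (T.α e x)) 1
  | symm {p q : Pt T} {r : ℝ} : PieceDist T p q r → PieceDist T q p r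

/-- `ChainDist T p q r` holds when there is a chain from `p` to `q`, each consecutive pair of
points lying in a common piece, of total length `r`. -/
inductive ChainDist (T : TreeOfSpacesData) : Pt T → Pt T → ℝ → Prop
  | single {p q : Pt T} {r : ℝ} : PieceDist T p q r → ChainDist T p q r
  | cons {p q r : Pt T} {c c' : ℝ} :
      PieceDist T p q c → ChainDist T q r c' → ChainDist T p r (c + c')

/-- The distance on the total space of a tree of spaces: the infimum of the lengths of chains
joining two points (with value `∞` if there is no chain). -/
noncomputable def tdist (T : TreeOfSpacesData) (p q : Pt T) : ENNReal :=
  ⨅ r : {r : ℝ // ChainDist T p q r}, ENNReal.ofReal r.1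

end TreeOfSpacesData

/-!
The quasi-isometry sends a vertex point `x ∈ X v` to `φ v x` and a rung point over `x ∈ X_e`
to `φ (ι e) x`.  It is coarse Lipschitz by a debt argument along chains: an anchor vertex point
follows the chain, carrying a debt (its distance to the current point, measured inside one
vertex space plus along one rung) that grows by the length travelled.  When the chain runs
along a whole rung, the anchor jumps to the far end and the debt is cleared; this costs a
bounded amount, paid for by the length `1` of the rung, so the additive errors of the `φ v`
do not accumulate along short steps.  By (4) the coarse inverses `φbar v` satisfy the same
hypotheses over `χ⁻¹`, so they give a coarse Lipschitz map back whose composite with the first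
one is close to the identity; this yields the lower bound and the coarse surjectivity.
-/
open scoped ENNReal NNReal

namespace TreeOfSpacesData

variable {S : TreeOfSpacesData}

lemma PieceDist.nonneg {p q : S.Pt} {r : ℝ} (h : PieceDist S p q r) : 0 ≤ r := by
  induction h with
  | vert => exact dist_nonneg
  | rung_rung => exact abs_nonneg _
  | bot_rung _ _ _ _ ht0 => exact ht0.le
  | top_rung _ _ _ _ _ ht1 => linarith
  | bot_top => exact zero_le_one
  | symm _ ih => exact ih

lemma ChainDist.nonneg {p q : S.Pt} {r : ℝ} (h : ChainDist S p q r) : 0 ≤ r := by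
  induction h with
  | single h => exact h.nonneg
  | cons h _ ih => exact add_nonneg h.nonneg ih

lemma ChainDist.append {p q r : S.Pt} {c c' : ℝ} (h : ChainDist S p q c)
    (h' : ChainDist S q r c') : ChainDist S p r (c + c') := by
  induction h with
  | single h => exact .cons h h'
  | cons h _ ih => rw [add_assoc]; exact .cons h (ih h')

lemma ChainDist.symm {p q : S.Pt} {c : ℝ} (h : ChainDist S p q c) : ChainDist S q p c := by
  induction h with
  | single h => exact .single h.symm
  | cons h _ ih => rw [add_comm]; exact ih.append (.single h.symm)

lemma tdist_le_of_chainDist {p q : S.Pt} {r : ℝ} (h : ChainDist S p q r) :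
    tdist S p q ≤ ENNReal.ofReal r :=
  iInf_le_of_le ⟨r, h⟩ le_rfl

lemma tdist_self (p : S.Pt) : tdist S p p = 0 := by
  refine nonpos_iff_eq_zero.mp ?_
  cases p with
  | vert v x => simpa using tdist_le_of_chainDist (.single (.vert v x x))
  | rung e x hx t ht0 ht1 =>
    simpa using tdist_le_of_chainDist (.single (.rung_rung e x hx t t ht0 ht1 ht0 ht1))

lemma tdist_comm (p q : S.Pt) : tdist S p q = tdist S q p :=
  le_antisymm (le_iInf fun r => tdist_le_of_chainDist r.2.symm)
    (le_iInf fun r => tdist_le_of_chainDist r.2.symm)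

lemma tdist_triangle (p q r : S.Pt) : tdist S p r ≤ tdist S p q + tdist S q r := by
  conv_rhs => rw [tdist, tdist, ENNReal.iInf_add]
  refine le_iInf fun c => ?_
  rw [ENNReal.add_iInf]
  exact le_iInf fun c' => (tdist_le_of_chainDist (c.2.append c'.2)).trans ENNReal.ofReal_add_le

noncomputable instance (S : TreeOfSpacesData) : PseudoEMetricSpace S.Pt where
  edist := tdist S
  edist_self := tdist_self
  edist_comm := tdist_comm
  edist_triangle := tdist_triangle

lemma edist_eq_tdist (p q : S.Pt) : edist p q = tdist S p q := rfl

lemma edist_le_of_pieceDist {p q : S.Pt} {r : ℝ} (h : PieceDist S p q r) :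
    edist p q ≤ ENNReal.ofReal r :=
  tdist_le_of_chainDist (.single h)

lemma edist_vert_le (v : S.V) (x y : S.X v) :
    edist (Pt.vert v x : S.Pt) (.vert v y) ≤ ENNReal.ofReal (dist x y) :=
  edist_le_of_pieceDist (.vert v x y)

lemma vert_cast {v w : S.V} (h : v = w) (x : S.X v) :
    (Pt.vert w (cast (congrArg S.X h) x) : S.Pt) = .vert v x := by
  subst h; rfl

lemma le_mul_edist_add_of_chainDist {D : ℝ≥0∞} {p q : S.Pt} {K B : ℝ} (hK : 0 < K)
    (hB : 0 ≤ B) (h : ∀ r, ChainDist S p q r → D ≤ ENNReal.ofReal (K * r + B)) :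
    D ≤ ENNReal.ofReal K * edist p q + ENNReal.ofReal B := by
  rw [edist_eq_tdist, tdist, ENNReal.mul_iInf_of_ne (ENNReal.ofReal_pos.mpr hK).ne'
    ENNReal.ofReal_ne_top, ENNReal.iInf_add]
  refine le_iInf fun r => ?_
  rw [← ENNReal.ofReal_mul hK.le, ← ENNReal.ofReal_add (mul_nonneg hK.le r.2.nonneg) hB]
  exact h r.1 r.2

/-- `Foot p v y off`: either `p` is the vertex point `y ∈ X v` and `off = 0`, or `p` lies inside
a rung with end `y` at distance `off` from it. -/
inductive Foot : S.Pt → (v : S.V) → S.X v → ℝ → Prop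
  | vert (v : S.V) (x : S.X v) : Foot (.vert v x) v x 0
  | bot (e : S.E) (x : S.X (S.ι e)) (hx : x ∈ S.Xe e) (t : ℝ) (ht0 : 0 < t) (ht1 : t < 1) :
      Foot (.rung e x hx t ht0 ht1) (S.ι e) x t
  | top (e : S.E) (x : S.X (S.ι e)) (hx : x ∈ S.Xe e) (t : ℝ) (ht0 : 0 < t) (ht1 : t < 1) :
      Foot (.rung e x hx t ht0 ht1) (S.τ e) (S.α e x) (1 - t)

inductive OppositeEnd : (v : S.V) → S.X v → S.Pt → Prop
  | up (e : S.E) (x : S.X (S.ι e)) (hx : x ∈ S.Xe e) :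
      OppositeEnd (S.ι e) x (.vert (S.τ e) (S.α e x))
  | down (e : S.E) (x : S.X (S.ι e)) (hx : x ∈ S.Xe e) :
      OppositeEnd (S.τ e) (S.α e x) (.vert (S.ι e) x)

lemma Foot.nonneg {p : S.Pt} {v : S.V} {y : S.X v} {off : ℝ} (h : Foot p v y off) :
    0 ≤ off := by
  cases h with
  | vert => exact le_rfl
  | bot _ _ _ _ ht0 => exact ht0.le
  | top _ _ _ _ _ ht1 => linarith

lemma Foot.edist_le {p : S.Pt} {v : S.V} {y : S.X v} {off : ℝ} (h : Foot p v y off) :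
    edist p (.vert v y) ≤ ENNReal.ofReal off := by
  cases h with
  | vert => simp
  | bot => exact edist_le_of_pieceDist (.symm (.bot_rung _ _ _ _ _ _))
  | top => exact edist_le_of_pieceDist (.symm (.top_rung _ _ _ _ _ _))

lemma OppositeEnd.exists_eq_vert {v : S.V} {y : S.X v} {q : S.Pt} (h : OppositeEnd v y q) :
    ∃ w z, q = .vert w z := by
  cases h <;> exact ⟨_, _, rfl⟩

/-- A move of length `c` from `p` to `q` either moves a foot of `p` by at most `c` inside its
vertex space, or runs along a whole rung to its opposite end. -/
def FootStep (p q : S.Pt) (c : ℝ) : Prop :=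
  ∀ v y off, Foot p v y off →
    (∃ y' off', Foot q v y' off' ∧ dist y y' + off' ≤ off + c) ∨
      (1 ≤ off + c ∧ OppositeEnd v y q)

lemma PieceDist.footStep {p q : S.Pt} {c : ℝ} (h : PieceDist S p q c) :
    FootStep p q c ∧ FootStep q p c := by
  induction h with
  | vert v x y =>
    refine ⟨?_, ?_⟩ <;> rintro _ _ _ ⟨⟩
    · exact .inl ⟨y, 0, .vert _ y, by simp⟩
    · exact .inl ⟨x, 0, .vert _ x, by simp [dist_comm]⟩
  | rung_rung e x hx s t hs0 hs1 ht0 ht1 =>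
    have h₁ := le_abs_self (s - t)
    have h₂ := neg_abs_le (s - t)
    refine ⟨?_, ?_⟩ <;> rintro _ _ _ (_ | _ | _)
    · exact .inl ⟨x, t, .bot e x hx t ht0 ht1, by rw [dist_self]; linarith⟩
    · exact .inl ⟨_, 1 - t, .top e x hx t ht0 ht1, by rw [dist_self]; linarith⟩
    · exact .inl ⟨x, s, .bot e x hx s hs0 hs1, by rw [dist_self]; linarith⟩
    · exact .inl ⟨_, 1 - s, .top e x hx s hs0 hs1, by rw [dist_self]; linarith⟩
  | bot_rung e x hx t ht0 ht1 =>
    refine ⟨?_, ?_⟩ <;> rintro _ _ _ (_ | _ | _)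
    · exact .inl ⟨x, t, .bot e x hx t ht0 ht1, by simp⟩
    · exact .inl ⟨x, 0, .vert _ x, by rw [dist_self]; linarith⟩
    · exact .inr ⟨by linarith, .down e x hx⟩
  | top_rung e x hx t ht0 ht1 =>
    refine ⟨?_, ?_⟩ <;> rintro _ _ _ (_ | _ | _)
    · exact .inl ⟨_, 1 - t, .top e x hx t ht0 ht1, by simp⟩
    · exact .inr ⟨by linarith, .up e x hx⟩
    · exact .inl ⟨_, 0, .vert _ _, by rw [dist_self]; linarith⟩
  | bot_top e x hx =>
    refine ⟨?_, ?_⟩ <;> rintro _ _ _ ⟨⟩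
    · exact .inr ⟨by simp, .up e x hx⟩
    · exact .inr ⟨by simp, .down e x hx⟩
  | symm _ ih => exact ⟨ih.2, ih.1⟩

def Anchored (v : S.V) (x : S.X v) (d : ℝ) (p : S.Pt) : Prop :=
  ∃ y off, Foot p v y off ∧ dist x y + off ≤ d

lemma Anchored.nonneg {v : S.V} {x : S.X v} {d : ℝ} {p : S.Pt} (h : Anchored v x d p) :
    0 ≤ d := by
  obtain ⟨y, off, hfoot, hd⟩ := h
  linarith [hfoot.nonneg, dist_nonneg (x := x) (y := y)]

def base : S.Pt → Σ v, S.X v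
  | .vert v x => ⟨v, x⟩
  | .rung e x _ _ _ _ => ⟨S.ι e, x⟩

def extend {Y : Type*} (f : ∀ v, S.X v → Y) (p : S.Pt) : Y :=
  f (base p).1 (base p).2

@[simp]
lemma extend_vert {Y : Type*} (f : ∀ v, S.X v → Y) (v : S.V) (x : S.X v) :
    extend f (.vert v x) = f v x :=
  rfl

lemma exists_foot_base (p : S.Pt) : ∃ off ≤ 1, Foot p (base p).1 (base p).2 off := by
  cases p with
  | vert v x => exact ⟨0, zero_le_one, .vert v x⟩
  | rung e x hx t ht0 ht1 => exact ⟨t, ht1.le, .bot e x hx t ht0 ht1⟩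

lemma edist_base_le_one (p : S.Pt) : edist p (.vert (base p).1 (base p).2) ≤ 1 := by
  obtain ⟨off, hoff, hfoot⟩ := exists_foot_base p
  exact hfoot.edist_le.trans (ENNReal.ofReal_le_one.mpr hoff)

structure IsCoarseLipschitzOnTree {Y : Type*} [PseudoEMetricSpace Y] (f : ∀ v, S.X v → Y)
    (L A₀ C : ℝ≥0) : Prop where
  edist_le : ∀ v (x y : S.X v), edist (f v x) (f v y) ≤ ENNReal.ofReal (L * dist x y + A₀)
  edist_rung_le :
    ∀ e, ∀ x ∈ S.Xe e, edist (f (S.ι e) x) (f (S.τ e) (S.α e x)) ≤ ENNReal.ofReal C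

namespace IsCoarseLipschitzOnTree

variable {Y : Type*} [PseudoEMetricSpace Y] {f : ∀ v, S.X v → Y} {L A₀ C : ℝ≥0} {K : ℝ}

lemma edist_oppositeEnd_le (hf : IsCoarseLipschitzOnTree f L A₀ C) {v : S.V} {y : S.X v}
    {q : S.Pt} (h : OppositeEnd v y q) : edist (f v y) (extend f q) ≤ ENNReal.ofReal C := by
  cases h with
  | up e x hx => exact hf.edist_rung_le e x hx
  | down e x hx => rw [edist_comm]; exact hf.edist_rung_le e x hx

lemma edist_foot_le (hf : IsCoarseLipschitzOnTree f L A₀ C) {p : S.Pt} {v : S.V} {y : S.X v}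
    {off : ℝ} (h : Foot p v y off) : edist (f v y) (extend f p) ≤ ENNReal.ofReal C := by
  cases h with
  | vert | bot => simp [extend, base]
  | top e x hx => rw [edist_comm]; exact hf.edist_rung_le e x hx

lemma edist_le_of_edist_le (hf : IsCoarseLipschitzOnTree f L A₀ C) {v : S.V} (x y : S.X v)
    {z : Y} (hz : edist (f v y) z ≤ ENNReal.ofReal C) :
    edist (f v x) z ≤ ENNReal.ofReal (L * dist x y + A₀ + C) :=
  calc edist (f v x) z ≤ edist (f v x) (f v y) + edist (f v y) z := edist_triangle _ _ _
    _ ≤ ENNReal.ofReal (L * dist x y + A₀) + ENNReal.ofReal C :=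
        add_le_add (hf.edist_le v x y) hz
    _ = ENNReal.ofReal (L * dist x y + A₀ + C) :=
        (ENNReal.ofReal_add (by positivity) C.2).symm

lemma edist_anchored_le (hf : IsCoarseLipschitzOnTree f L A₀ C) {p : S.Pt} {v : S.V}
    {x : S.X v} {d : ℝ} (h : Anchored v x d p) :
    edist (f v x) (extend f p) ≤ ENNReal.ofReal (L * d + A₀ + C) := by
  obtain ⟨y, off, hfoot, hd⟩ := h
  refine (hf.edist_le_of_edist_le x y (hf.edist_foot_le hfoot)).trans ?_
  have : dist x y ≤ d := by linarith [hfoot.nonneg]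
  gcongr

/-- Either the anchor stays and the debt grows by `c`, or a whole rung is traversed and the
anchor jumps to its far end with debt `0`. -/
lemma anchored_step (hf : IsCoarseLipschitzOnTree f L A₀ C) (hLK : L ≤ K) (hCK : A₀ + C ≤ K)
    {p q : S.Pt} {c : ℝ} (h : FootStep p q c) {v : S.V} {x : S.X v} {d : ℝ}
    (hp : Anchored v x d p) :
    ∃ w x' d', Anchored w x' d' q ∧ d' ≤ d + c ∧
      edist (f v x) (f w x') ≤ ENNReal.ofReal (K * (d + c - d')) := by
  obtain ⟨y, off, hfoot, hd⟩ := hp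
  have hoff := hfoot.nonneg
  have hxy := dist_nonneg (x := x) (y := y)
  rcases h v y off hfoot with ⟨y', off', hq, hle⟩ | ⟨hc, hend⟩
  · refine ⟨v, x, d + c, ⟨y', off', hq, ?_⟩, le_rfl, by simp⟩
    linarith [dist_triangle x y y']
  · obtain ⟨w, z, rfl⟩ := hend.exists_eq_vert
    refine ⟨w, z, 0, ⟨z, 0, .vert w z, by simp⟩, by linarith, ?_⟩
    refine (hf.edist_le_of_edist_le x y (hf.edist_oppositeEnd_le hend)).trans ?_
    have hK : 0 ≤ K := le_trans (by positivity) hCK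
    gcongr
    nlinarith

lemma anchored_chain (hf : IsCoarseLipschitzOnTree f L A₀ C) (hLK : L ≤ K)
    (hCK : A₀ + C ≤ K) {p q : S.Pt} {r : ℝ} (h : ChainDist S p q r) {v : S.V} {x : S.X v}
    {d : ℝ} (hp : Anchored v x d p) :
    ∃ w x' d', Anchored w x' d' q ∧ d' ≤ d + r ∧
      edist (f v x) (f w x') ≤ ENNReal.ofReal (K * (d + r - d')) := by
  induction h generalizing v x d with
  | single h => exact hf.anchored_step hLK hCK h.footStep.1 hp
  | @cons _ _ _ c r h _ ih =>
    have hK : 0 ≤ K := le_trans (by positivity) hCK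
    obtain ⟨w₁, x₁, d₁, hp₁, hle₁, hb₁⟩ := hf.anchored_step hLK hCK h.footStep.1 hp
    obtain ⟨w, x', d', hq, hle, hb⟩ := ih hp₁
    refine ⟨w, x', d', hq, by linarith, ?_⟩
    calc edist (f v x) (f w x') ≤ edist (f v x) (f w₁ x₁) + edist (f w₁ x₁) (f w x') :=
          edist_triangle _ _ _
      _ ≤ ENNReal.ofReal (K * (d + c - d₁)) + ENNReal.ofReal (K * (d₁ + r - d')) :=
          add_le_add hb₁ hb
      _ = ENNReal.ofReal (K * (d + (c + r) - d')) := by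
          rw [← ENNReal.ofReal_add (by nlinarith) (by nlinarith)]
          ring_nf

theorem edist_extend_le (hf : IsCoarseLipschitzOnTree f L A₀ C) (hLK : L ≤ K)
    (hCK : A₀ + C ≤ K) (hK : 0 < K) (p q : S.Pt) :
    edist (extend f p) (extend f q) ≤
      ENNReal.ofReal K * edist p q + ENNReal.ofReal (2 * K) := by
  refine le_mul_edist_add_of_chainDist hK (by positivity) fun r hr => ?_
  obtain ⟨off, hoff, hfoot⟩ := exists_foot_base p
  obtain ⟨w, x', d', hq, hle, hb⟩ :=
    hf.anchored_chain hLK hCK hr (x := (base p).2) ⟨_, off, hfoot, by rw [dist_self, zero_add]⟩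
  have hd' := hq.nonneg
  calc edist (extend f p) (extend f q)
        ≤ edist (extend f p) (f w x') + edist (f w x') (extend f q) := edist_triangle _ _ _
    _ ≤ ENNReal.ofReal (K * (off + r - d')) + ENNReal.ofReal (L * d' + A₀ + C) :=
        add_le_add hb (hf.edist_anchored_le hq)
    _ = ENNReal.ofReal (K * (off + r - d') + (L * d' + A₀ + C)) :=
        (ENNReal.ofReal_add (by nlinarith) (by positivity)).symm
    _ ≤ ENNReal.ofReal (K * r + 2 * K) := ENNReal.ofReal_le_ofReal <| by
        nlinarith [mul_le_mul_of_nonneg_right hLK hd', mul_le_mul_of_nonneg_left hoff hK.le]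

end IsCoarseLipschitzOnTree

lemma edist_le_of_near_rung {e : S.E} {z : S.X (S.ι e)} (hz : z ∈ S.Xe e) {a b : S.Pt} {A : ℝ}
    (hA : 0 ≤ A) (ha : edist a (.vert (S.ι e) z) ≤ ENNReal.ofReal A)
    (hb : edist (.vert (S.τ e) (S.α e z)) b ≤ ENNReal.ofReal A) :
    edist a b ≤ ENNReal.ofReal (1 + 2 * A) :=
  calc edist a b
        ≤ edist a (.vert (S.ι e) z) + edist (.vert (S.ι e) z) (.vert (S.τ e) (S.α e z))
          + edist (.vert (S.τ e) (S.α e z)) b := edist_triangle4 _ _ _ _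
    _ ≤ ENNReal.ofReal A + ENNReal.ofReal 1 + ENNReal.ofReal A :=
        add_le_add (add_le_add ha (edist_le_of_pieceDist (.bot_top e z hz))) hb
    _ = ENNReal.ofReal (1 + 2 * A) := by
        rw [← ENNReal.ofReal_add hA zero_le_one, ← ENNReal.ofReal_add (by positivity) hA]
        ring_nf

end TreeOfSpacesData

lemma dist_le_of_rightInverse {X Y : Type*} [PseudoMetricSpace X] [PseudoMetricSpace Y]
    {φ : X → Y} {ψ : Y → X} {M A : ℝ} (hM : 0 < M)
    (hφ : ∀ x y, dist x y / M - A ≤ dist (φ x) (φ y)) (hψ : ∀ y, dist (φ (ψ y)) y ≤ A)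
    (a b : Y) : dist (ψ a) (ψ b) ≤ M * dist a b + 3 * M * A := by
  have h₁ := dist_triangle4 (φ (ψ a)) a b (φ (ψ b))
  have h₂ : dist (ψ a) (ψ b) / M ≤ dist a b + 3 * A := by
    linarith [hφ (ψ a) (ψ b), hψ a, hψ b, dist_comm b (φ (ψ b))]
  rw [div_le_iff₀ hM] at h₂
  linarith

lemma edist_le_of_edist_comp_le {X Y : Type*} [PseudoEMetricSpace X] [PseudoEMetricSpace Y]
    {Φ : X → Y} {Ψ : Y → X} {K B D : ℝ≥0∞}
    (hΨ : ∀ a b, edist (Ψ a) (Ψ b) ≤ K * edist a b + B)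
    (hΨΦ : ∀ x, edist x (Ψ (Φ x)) ≤ D) (x y : X) :
    edist x y ≤ K * edist (Φ x) (Φ y) + (B + 2 * D) :=
  calc edist x y ≤ edist x (Ψ (Φ x)) + edist (Ψ (Φ x)) (Ψ (Φ y)) + edist (Ψ (Φ y)) y :=
        edist_triangle4 _ _ _ _
    _ ≤ D + (K * edist (Φ x) (Φ y) + B) + D := by
        rw [edist_comm _ y]
        gcongr
        exacts [hΨΦ x, hΨ _ _, hΨΦ y]
    _ = K * edist (Φ x) (Φ y) + (B + 2 * D) := by ring

namespace TreeOfSpacesData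

variable {T T' : TreeOfSpacesData} (χV : T.V ≃ T'.V)

/-- The family `ψ (χV⁻¹ v')`, read on `X' v'` through `χV (χV⁻¹ v') = v'`. -/
def invFamily (ψ : ∀ v, T'.X (χV v) → T.X v) (v' : T'.V) (y : T'.X v') : T.Pt :=
  .vert (χV.symm v') (ψ _ (cast (congrArg T'.X (χV.apply_symm_apply v').symm) y))

lemma invFamily_of_eq (ψ : ∀ v, T'.X (χV v) → T.X v) {v' : T'.V} {v : T.V} (h : v' = χV v)
    (y : T'.X v') : invFamily χV ψ v' y = .vert v (ψ v (cast (congrArg T'.X h) y)) := by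
  subst h
  have key : ∀ u (hu : u = v) (h' : T'.X (χV v) = T'.X (χV u)),
      (Pt.vert u (ψ u (cast h' y)) : T.Pt) = .vert v (ψ v y) := by
    rintro u rfl h'
    rfl
  exact key _ (χV.symm_apply_apply v) _

lemma invFamily_apply (ψ : ∀ v, T'.X (χV v) → T.X v) (v : T.V) (y : T'.X (χV v)) :
    invFamily χV ψ (χV v) y = .vert v (ψ v y) :=
  invFamily_of_eq χV ψ rfl y

variable {χV} {φ : ∀ v : T.V, T.X v → T'.X (χV v)}
    {φbar : ∀ v : T.V, T'.X (χV v) → T.X v} {M A : ℝ}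

lemma edist_extend_invFamily_le (hA : 0 ≤ A)
    (hφbar : ∀ (v : T.V) (x : T.X v), dist (φbar v (φ v x)) x ≤ A) (p : T.Pt) :
    edist p (extend (invFamily χV φbar) (extend (fun v x => Pt.vert (χV v) (φ v x)) p)) ≤
      ENNReal.ofReal (1 + A) := by
  rw [ENNReal.ofReal_add zero_le_one hA, ENNReal.ofReal_one]
  refine (edist_triangle _ _ _).trans (add_le_add (edist_base_le_one p) ?_)
  change edist _ (invFamily χV φbar (χV (base p).1) (φ _ (base p).2)) ≤ _
  rw [invFamily_apply, edist_comm]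
  exact (edist_vert_le _ _ _).trans (ENNReal.ofReal_le_ofReal (hφbar _ _))

lemma exists_edist_extend_le (hA : 0 ≤ A)
    (hφ : ∀ (v : T.V) (y : T'.X (χV v)), dist (φ v (φbar v y)) y ≤ A) (q : T'.Pt) :
    ∃ p : T.Pt, edist q (extend (fun v x => Pt.vert (χV v) (φ v x)) p) ≤
      ENNReal.ofReal (1 + A) := by
  obtain ⟨v', y, hq⟩ : ∃ v' y, edist q (Pt.vert v' y) ≤ 1 := ⟨_, _, edist_base_le_one q⟩
  obtain ⟨v, rfl⟩ := χV.surjective v'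
  refine ⟨.vert v (φbar v y), ?_⟩
  rw [ENNReal.ofReal_add zero_le_one hA, ENNReal.ofReal_one, extend_vert]
  refine (edist_triangle _ _ _).trans (add_le_add hq ?_)
  rw [edist_comm]
  exact (edist_vert_le _ _ _).trans (ENNReal.ofReal_le_ofReal (hφ v y))

variable {χE : T.E ≃ T'.E} (hι : ∀ e : T.E, T'.ι (χE e) = χV (T.ι e))
    (hτ : ∀ e : T.E, T'.τ (χE e) = χV (T.τ e))

lemma isCoarseLipschitzOnTree_of_intertwining (hM : 0 ≤ M) (hA : 0 ≤ A)
    (hφ : ∀ (v : T.V) (x y : T.X v), dist (φ v x) (φ v y) ≤ M * dist x y + A)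
    (h3 : ∀ e : T.E, ∀ x ∈ T.Xe e, ∃ y ∈ T'.Xe (χE e),
      dist (φ (T.ι e) x) (cast (congrArg T'.X (hι e)) y) ≤ A ∧
      dist (φ (T.τ e) (T.α e x)) (cast (congrArg T'.X (hτ e)) (T'.α (χE e) y)) ≤ A) :
    IsCoarseLipschitzOnTree (fun v x => (Pt.vert (χV v) (φ v x) : T'.Pt))
      (⟨M, hM⟩ : ℝ≥0) ⟨A, hA⟩ ⟨1 + 2 * A, by positivity⟩ := by
  refine ⟨fun v x y => (edist_vert_le _ _ _).trans (ENNReal.ofReal_le_ofReal (hφ v x y)),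
    fun e x hx => ?_⟩
  obtain ⟨y, hy, h₁, h₂⟩ := h3 e x hx
  refine edist_le_of_near_rung hy hA ?_ ?_
  · rw [← vert_cast (hι e)]
    exact (edist_vert_le _ _ _).trans (ENNReal.ofReal_le_ofReal h₁)
  · rw [← vert_cast (hτ e), edist_comm]
    exact (edist_vert_le _ _ _).trans (ENNReal.ofReal_le_ofReal h₂)

lemma isCoarseLipschitzOnTree_invFamily (hM : 0 < M) (hA : 0 ≤ A)
    (hφ : ∀ (v : T.V) (x y : T.X v), dist x y / M - A ≤ dist (φ v x) (φ v y))
    (hφbar : ∀ (v : T.V) (y : T'.X (χV v)), dist (φ v (φbar v y)) y ≤ A)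
    (h4 : ∀ e : T.E, ∀ y ∈ T'.Xe (χE e), ∃ x ∈ T.Xe e,
      dist (φbar (T.ι e) (cast (congrArg T'.X (hι e)) y)) x ≤ A ∧
      dist (φbar (T.τ e) (cast (congrArg T'.X (hτ e)) (T'.α (χE e) y))) (T.α e x) ≤ A) :
    IsCoarseLipschitzOnTree (invFamily χV φbar)
      (⟨M, hM.le⟩ : ℝ≥0) ⟨3 * M * A, by positivity⟩ ⟨1 + 2 * A, by positivity⟩ := by
  refine ⟨fun v' a b => ?_, fun e' y hy => ?_⟩
  · obtain ⟨v, rfl⟩ := χV.surjective v'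
    rw [invFamily_apply, invFamily_apply]
    exact (edist_vert_le _ _ _).trans (ENNReal.ofReal_le_ofReal
      (dist_le_of_rightInverse hM (hφ v) (hφbar v) a b))
  · obtain ⟨e, rfl⟩ := χE.surjective e'
    obtain ⟨x, hx, h₁, h₂⟩ := h4 e y hy
    rw [invFamily_of_eq χV φbar (hι e), invFamily_of_eq χV φbar (hτ e)]
    refine edist_le_of_near_rung hx hA
      ((edist_vert_le _ _ _).trans (ENNReal.ofReal_le_ofReal h₁)) ?_
    rw [edist_comm]
    exact (edist_vert_le _ _ _).trans (ENNReal.ofReal_le_ofReal h₂)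

end TreeOfSpacesData

open TreeOfSpacesData in
theorem tree_of_quasi_isometries_gives_quasi_isometry_general
    (T T' : TreeOfSpacesData)
    (χV : T.V ≃ T'.V) (χE : T.E ≃ T'.E)
    (hι : ∀ e : T.E, T'.ι (χE e) = χV (T.ι e))
    (hτ : ∀ e : T.E, T'.τ (χE e) = χV (T.τ e))
    (M A : ℝ) (hM : 1 ≤ M) (hA : 0 ≤ A)
    (φ : ∀ v : T.V, T.X v → T'.X (χV v))
    (φbar : ∀ v : T.V, T'.X (χV v) → T.X v)
    -- (1) each `φ v` is an (M,A)-quasi-isometry with coarse inverse `φbar v`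
    (hqi : ∀ (v : T.V) (x y : T.X v),
      dist x y / M - A ≤ dist (φ v x) (φ v y) ∧ dist (φ v x) (φ v y) ≤ M * dist x y + A)
    (hinv : ∀ v : T.V, (∀ x : T.X v, dist (φbar v (φ v x)) x ≤ A) ∧
      (∀ y : T'.X (χV v), dist (φ v (φbar v y)) y ≤ A))
    -- (3) for each oriented edge and its reversal
    (h3 : ∀ e : T.E, ∀ x ∈ T.Xe e, ∃ y ∈ T'.Xe (χE e),
      dist (φ (T.ι e) x) (cast (congrArg T'.X (hι e)) y) ≤ A ∧
      dist (φ (T.τ e) (T.α e x)) (cast (congrArg T'.X (hτ e)) (T'.α (χE e) y)) ≤ A)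
    -- (4) for each oriented edge and its reversal
    (h4 : ∀ e : T.E, ∀ y ∈ T'.Xe (χE e), ∃ x ∈ T.Xe e,
      dist (φbar (T.ι e) (cast (congrArg T'.X (hι e)) y)) x ≤ A ∧
      dist (φbar (T.τ e) (cast (congrArg T'.X (hτ e)) (T'.α (χE e) y))) (T.α e x) ≤ A) :
    ∃ (M' A' : ℝ) (Φ : T.Pt → T'.Pt), 1 ≤ M' ∧ 0 ≤ A' ∧
      (∀ p q : T.Pt,
        T'.tdist (Φ p) (Φ q) ≤ ENNReal.ofReal M' * T.tdist p q + ENNReal.ofReal A') ∧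
      (∀ p q : T.Pt,
        T.tdist p q ≤ ENNReal.ofReal M' * T'.tdist (Φ p) (Φ q) + ENNReal.ofReal A') ∧
      (∀ q : T'.Pt, ∃ p : T.Pt, T'.tdist q (Φ p) ≤ ENNReal.ofReal A') ∧
      (∀ (v : T.V) (x : T.X v), Φ (.vert v x) = .vert (χV v) (φ v x)) := by
  have hM0 : 0 < M := by linarith
  have hMA : 0 ≤ M * A := by positivity
  obtain ⟨K, hK⟩ : ∃ K, K = M + 3 * M * A + 3 * A + 1 := ⟨_, rfl⟩
  have hK0 : 0 < K := by rw [hK]; positivity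
  have hΦ := (isCoarseLipschitzOnTree_of_intertwining hι hτ hM0.le hA
    (fun v x y => (hqi v x y).2) h3).edist_extend_le (K := K) (show M ≤ K by linarith)
      (show A + (1 + 2 * A) ≤ K by linarith) hK0
  have hΨ := (isCoarseLipschitzOnTree_invFamily hι hτ hM0 hA (fun v x y => (hqi v x y).1)
    (fun v => (hinv v).2) h4).edist_extend_le (K := K) (show M ≤ K by linarith)
      (show 3 * M * A + (1 + 2 * A) ≤ K by linarith) hK0
  simp only [← edist_eq_tdist]
  refine ⟨K, 2 * K + 2 * (1 + A), extend fun v x => .vert (χV v) (φ v x), by linarith,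
    by positivity, fun p q => (hΦ p q).trans ?_, fun p q => ?_, fun q => ?_, fun v x => rfl⟩
  · gcongr
    linarith
  · refine (edist_le_of_edist_comp_le hΨ
      (edist_extend_invFamily_le hA fun v => (hinv v).1) p q).trans_eq ?_
    rw [ENNReal.ofReal_add (p := 2 * K) (by positivity) (by positivity),
      ENNReal.ofReal_mul (p := 2) (q := 1 + A) zero_le_two, ENNReal.ofReal_ofNat]
  · obtain ⟨p, hp⟩ := exists_edist_extend_le hA (fun v => (hinv v).2) q
    exact ⟨p, hp.trans (ENNReal.ofReal_le_ofReal (by linarith))⟩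

open TreeOfSpacesData in
/-- A tree of quasi-isometries over an isomorphism of oriented trees yields a quasi-isometry
of the total spaces restricting on each vertex space to the given quasi-isometry.  Here
`χV, χE` form an isomorphism of the underlying oriented trees, `φ v` are uniform
`(M,A)`-quasi-isometries with coarse inverses `φbar v`, condition (2) (`h2`/`h2rev`) says the
image of each edge space is `A`-coarsely equivalent to the corresponding edge space of `T'`
(and likewise for `φbar`), and conditions (3) and (4) (`h3`,`h3rev`,`h4`,`h4rev`) say the
attaching maps are intertwined up to error `A` (for each oriented edge and its reversal). -/
theorem tree_of_quasi_isometries_gives_quasi_isometry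
    (T T' : TreeOfSpacesData)
    (htree : T.IsOrientedSimplicialTree) (htree' : T'.IsOrientedSimplicialTree)
    (hT : T.IsTreeOfSpaces) (hT' : T'.IsTreeOfSpaces)
    (χV : T.V ≃ T'.V) (χE : T.E ≃ T'.E)
    (hι : ∀ e : T.E, T'.ι (χE e) = χV (T.ι e))
    (hτ : ∀ e : T.E, T'.τ (χE e) = χV (T.τ e))
    (M A : ℝ) (hM : 1 ≤ M) (hA : 0 ≤ A)
    (φ : ∀ v : T.V, T.X v → T'.X (χV v))
    (φbar : ∀ v : T.V, T'.X (χV v) → T.X v)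
    -- (1) each `φ v` is an (M,A)-quasi-isometry with coarse inverse `φbar v`
    (hqi : ∀ (v : T.V) (x y : T.X v),
      dist x y / M - A ≤ dist (φ v x) (φ v y) ∧ dist (φ v x) (φ v y) ≤ M * dist x y + A)
    (hsurj : ∀ (v : T.V) (y : T'.X (χV v)), ∃ x : T.X v, dist y (φ v x) ≤ A)
    (hinv : ∀ v : T.V, (∀ x : T.X v, dist (φbar v (φ v x)) x ≤ A) ∧
      (∀ y : T'.X (χV v), dist (φ v (φbar v y)) y ≤ A))
    -- (2) for each oriented edge
    (h2 : ∀ e : T.E,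
      (∀ x ∈ T.Xe e, ∃ y ∈ T'.Xe (χE e),
        dist (φ (T.ι e) x) (cast (congrArg T'.X (hι e)) y) ≤ A) ∧
      (∀ y ∈ T'.Xe (χE e), ∃ x ∈ T.Xe e,
        dist (φ (T.ι e) x) (cast (congrArg T'.X (hι e)) y) ≤ A) ∧
      (∀ y ∈ T'.Xe (χE e), ∃ x ∈ T.Xe e,
        dist (φbar (T.ι e) (cast (congrArg T'.X (hι e)) y)) x ≤ A) ∧
      (∀ x ∈ T.Xe e, ∃ y ∈ T'.Xe (χE e),
        dist (φbar (T.ι e) (cast (congrArg T'.X (hι e)) y)) x ≤ A))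
    -- (2) for the reversal of each oriented edge
    (h2rev : ∀ e : T.E,
      (∀ x ∈ T.α e '' T.Xe e, ∃ y ∈ T'.α (χE e) '' T'.Xe (χE e),
        dist (φ (T.τ e) x) (cast (congrArg T'.X (hτ e)) y) ≤ A) ∧
      (∀ y ∈ T'.α (χE e) '' T'.Xe (χE e), ∃ x ∈ T.α e '' T.Xe e,
        dist (φ (T.τ e) x) (cast (congrArg T'.X (hτ e)) y) ≤ A) ∧
      (∀ y ∈ T'.α (χE e) '' T'.Xe (χE e), ∃ x ∈ T.α e '' T.Xe e,
        dist (φbar (T.τ e) (cast (congrArg T'.X (hτ e)) y)) x ≤ A) ∧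
      (∀ x ∈ T.α e '' T.Xe e, ∃ y ∈ T'.α (χE e) '' T'.Xe (χE e),
        dist (φbar (T.τ e) (cast (congrArg T'.X (hτ e)) y)) x ≤ A))
    -- (3) for each oriented edge and its reversal
    (h3 : ∀ e : T.E, ∀ x ∈ T.Xe e, ∃ y ∈ T'.Xe (χE e),
      dist (φ (T.ι e) x) (cast (congrArg T'.X (hι e)) y) ≤ A ∧
      dist (φ (T.τ e) (T.α e x)) (cast (congrArg T'.X (hτ e)) (T'.α (χE e) y)) ≤ A)
    (h3rev : ∀ e : T.E, ∀ x ∈ T.α e '' T.Xe e, ∃ y ∈ T'.α (χE e) '' T'.Xe (χE e),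
      dist (φ (T.τ e) x) (cast (congrArg T'.X (hτ e)) y) ≤ A ∧
      dist (φ (T.ι e) (T.β e x)) (cast (congrArg T'.X (hι e)) (T'.β (χE e) y)) ≤ A)
    -- (4) for each oriented edge and its reversal
    (h4 : ∀ e : T.E, ∀ y ∈ T'.Xe (χE e), ∃ x ∈ T.Xe e,
      dist (φbar (T.ι e) (cast (congrArg T'.X (hι e)) y)) x ≤ A ∧
      dist (φbar (T.τ e) (cast (congrArg T'.X (hτ e)) (T'.α (χE e) y))) (T.α e x) ≤ A)
    (h4rev : ∀ e : T.E, ∀ y ∈ T'.α (χE e) '' T'.Xe (χE e), ∃ x ∈ T.α e '' T.Xe e,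
      dist (φbar (T.τ e) (cast (congrArg T'.X (hτ e)) y)) x ≤ A ∧
      dist (φbar (T.ι e) (cast (congrArg T'.X (hι e)) (T'.β (χE e) y))) (T.β e x) ≤ A) :
    ∃ (M' A' : ℝ) (Φ : T.Pt → T'.Pt), 1 ≤ M' ∧ 0 ≤ A' ∧
      (∀ p q : T.Pt,
        T'.tdist (Φ p) (Φ q) ≤ ENNReal.ofReal M' * T.tdist p q + ENNReal.ofReal A') ∧
      (∀ p q : T.Pt,
        T.tdist p q ≤ ENNReal.ofReal M' * T'.tdist (Φ p) (Φ q) + ENNReal.ofReal A') ∧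
      (∀ q : T'.Pt, ∃ p : T.Pt, T'.tdist q (Φ p) ≤ ENNReal.ofReal A') ∧
      (∀ (v : T.V) (x : T.X v), Φ (.vert v x) = .vert (χV v) (φ v x)) :=
  tree_of_quasi_isometries_gives_quasi_isometry_general T T' χV χE hι hτ M A hM hA φ φbar hqi hinv
    h3 h4
end
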